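/- Suppose γ is a density operator on D ⊗ E commuting with R^x_a ⊗ I_E for every a ∈ {1,…,n} and x (where {R^x_a}_x are POVMs on D). Then the correlation p^{xy}_{ab} = Tr[γ (R^x_a ⊗ S^y_b)] (for any POVMs {S^y_b}_y on E) is classical, i.e., a convex combination of product correlations: there exist a finite probability distribution (λ_k) and probability vectors (q^x_{a,k})_x, (r^y_{b,k})_y such that p^{xy}_{ab} = Σ_k λ_k q^x_{a,k} r^y_{b,k} for all a,b,x,y. -/

import Mathlib

open Matrix ComplexOrder Kronecker
open scoped MatrixOrder

/-!
Fix an order on Alice's settings and let her measure all of them in sequence, each with its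
Lüders instrument `ρ ↦ √R ρ √R`. Every `√(R^x_a) ⊗ 1` commutes with `γ` and with Bob's
`1 ⊗ S^y_b`, so summing the probability of an outcome string `v` over all coordinates but the
`a`-th collapses, one measurement at a time, to `Tr[(R^x_a ⊗ S^y_b) γ]`. Hence `v` is a classical
hidden variable: Alice answers `v a` deterministically and Bob samples from his POVM conditioned
on `v`.
-/

lemma Fintype.sum_fin_succ_pi {X M : Type*} [Fintype X] [AddCommMonoid M] {n : ℕ}
    (g : (Fin (n + 1) → X) → M) : ∑ v, g v = ∑ x, ∑ w, g (Fin.cons x w) := by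
  rw [← (Fin.consEquiv fun _ => X).sum_comp, Fintype.sum_prod_type]
  rfl

lemma Matrix.commute_kronecker_one_one_kronecker {m n R : Type*} [Fintype m] [Fintype n]
    [DecidableEq m] [DecidableEq n] [CommSemiring R] (A : Matrix m m R) (B : Matrix n n R) :
    Commute (A ⊗ₖ (1 : Matrix n n R)) ((1 : Matrix m m R) ⊗ₖ B) := by
  simp only [Commute, SemiconjBy, ← mul_kronecker_mul, mul_one, one_mul]

lemma Matrix.sum_kronecker {ι l m n p R : Type*} [CommSemiring R] (s : Finset ι)
    (A : ι → Matrix l m R) (B : Matrix n p R) :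
    (∑ i ∈ s, A i) ⊗ₖ B = ∑ i ∈ s, A i ⊗ₖ B := by
  ext; simp [kroneckerMap_apply, Finset.sum_mul, sum_apply]

lemma Matrix.kronecker_sum {ι l m n p R : Type*} [CommSemiring R] (s : Finset ι)
    (A : Matrix l m R) (B : ι → Matrix n p R) :
    A ⊗ₖ (∑ i ∈ s, B i) = ∑ i ∈ s, A ⊗ₖ B i := by
  ext; simp [kroneckerMap_apply, Finset.mul_sum, sum_apply]

namespace Matrix

variable {d : Type*} [Fintype d] [DecidableEq d] {𝕜 : Type*} [RCLike 𝕜]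

lemma commute_cfcSqrt {P C : Matrix d d 𝕜} (h : Commute P C) : Commute (CFC.sqrt P) C := by
  rw [CFC.sqrt_eq_cfc]; exact h.cfc_nnreal _

lemma conjTranspose_cfcSqrt (P : Matrix d d 𝕜) : (CFC.sqrt P)ᴴ = CFC.sqrt P :=
  (CFC.sqrt_nonneg P).isSelfAdjoint

lemma PosSemidef.trace_mul_nonneg {M N : Matrix d d 𝕜} (hM : M.PosSemidef) (hN : N.PosSemidef) :
    0 ≤ (M * N).trace := by
  rw [← CFC.sqrt_mul_sqrt_self M hM.nonneg, mul_assoc, trace_mul_comm, mul_assoc]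
  have := hN.conjTranspose_mul_mul_same (CFC.sqrt M)
  rw [conjTranspose_cfcSqrt, mul_assoc] at this
  exact this.trace_nonneg

lemma trace_cfcSqrt_mul_mul_cfcSqrt_mul {P C : Matrix d d 𝕜} (hP : P.PosSemidef)
    (hC : Commute P C) (M : Matrix d d 𝕜) :
    (CFC.sqrt P * M * CFC.sqrt P * C).trace = (M * P * C).trace := by
  rw [show CFC.sqrt P * M * CFC.sqrt P * C = CFC.sqrt P * (M * CFC.sqrt P * C) by
    simp only [mul_assoc], trace_mul_comm]
  simp only [mul_assoc]
  rw [← (commute_cfcSqrt hC).eq, ← mul_assoc (CFC.sqrt P), CFC.sqrt_mul_sqrt_self P hP.nonneg]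

variable {X : Type*}

/-- Kraus operator of the sequential Lüders measurement of `P 0, …, P (n - 1)`
with outcomes `v`. -/
noncomputable def ludersProd {n : ℕ} (P : Fin n → X → Matrix d d 𝕜) (v : Fin n → X) :
    Matrix d d 𝕜 :=
  (List.ofFn fun i => CFC.sqrt (P i (v i))).prod

@[simp]
lemma ludersProd_zero (P : Fin 0 → X → Matrix d d 𝕜) (v : Fin 0 → X) :
    ludersProd P v = 1 := by
  simp [ludersProd]

lemma conjTranspose_ludersProd_cons_mul {n : ℕ} (P : Fin (n + 1) → X → Matrix d d 𝕜) (x : X)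
    (w : Fin n → X) (M : Matrix d d 𝕜) :
    (ludersProd P (Fin.cons x w))ᴴ * M * ludersProd P (Fin.cons x w) =
      (ludersProd (fun i => P i.succ) w)ᴴ * (CFC.sqrt (P 0 x) * M * CFC.sqrt (P 0 x)) *
        ludersProd (fun i => P i.succ) w := by
  simp only [ludersProd, List.ofFn_succ, List.prod_cons, Fin.cons_zero, Fin.cons_succ,
    conjTranspose_mul, conjTranspose_cfcSqrt, mul_assoc]

lemma conjTranspose_ludersProd_cons_mul_self {n : ℕ} {P : Fin (n + 1) → X → Matrix d d 𝕜}
    {x : X} (hP : (P 0 x).PosSemidef) (w : Fin n → X) :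
    (ludersProd P (Fin.cons x w))ᴴ * ludersProd P (Fin.cons x w) =
      (ludersProd (fun i => P i.succ) w)ᴴ * P 0 x * ludersProd (fun i => P i.succ) w := by
  simpa [CFC.sqrt_mul_sqrt_self _ hP.nonneg] using conjTranspose_ludersProd_cons_mul P x w 1

lemma commute_ludersProd {n : ℕ} {P : Fin n → X → Matrix d d 𝕜} {C : Matrix d d 𝕜}
    (hC : ∀ i x, Commute (P i x) C) (v : Fin n → X) : Commute (ludersProd P v) C :=
  Commute.list_prod_left _ _ fun _ h => by
    obtain ⟨i, rfl⟩ := List.mem_ofFn.mp h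
    exact commute_cfcSqrt (hC i (v i))

variable [Fintype X]

lemma sum_trace_ludersProd_conj {n : ℕ} {P : Fin n → X → Matrix d d 𝕜} {C : Matrix d d 𝕜}
    (hP : ∀ i x, (P i x).PosSemidef) (hsum : ∀ i, ∑ x, P i x = 1)
    (hC : ∀ i x, Commute (P i x) C) (M : Matrix d d 𝕜) :
    ∑ v, ((ludersProd P v)ᴴ * M * ludersProd P v * C).trace = (M * C).trace := by
  induction n generalizing M with
  | zero => simp
  | succ n ih =>
    simp only [Fintype.sum_fin_succ_pi, conjTranspose_ludersProd_cons_mul]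
    simp only [ih (fun i => hP i.succ) (fun i => hsum i.succ) (fun i => hC i.succ),
      trace_cfcSqrt_mul_mul_cfcSqrt_mul (hP 0 _) (hC 0 _)]
    rw [← trace_sum, ← Finset.sum_mul, ← Finset.mul_sum, hsum 0, mul_one]

lemma sum_trace_ludersProd_of_eq [DecidableEq X] {n : ℕ} {P : Fin n → X → Matrix d d 𝕜}
    {C : Matrix d d 𝕜} (hP : ∀ i x, (P i x).PosSemidef) (hsum : ∀ i, ∑ x, P i x = 1)
    (hC : ∀ i x, Commute (P i x) C) (j : Fin n) (x₀ : X) :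
    ∑ v with v j = x₀, ((ludersProd P v)ᴴ * ludersProd P v * C).trace =
      (P j x₀ * C).trace := by
  induction n with
  | zero => exact j.elim0
  | succ n ih =>
    rw [Finset.sum_filter, Fintype.sum_fin_succ_pi]
    simp only [conjTranspose_ludersProd_cons_mul_self (hP 0 _)]
    cases j using Fin.cases with
    | zero =>
      simp only [Fin.cons_zero, ← Finset.ite_sum_zero, Finset.sum_ite_eq', Finset.mem_univ,
        if_true]
      exact sum_trace_ludersProd_conj (fun i => hP i.succ) (fun i => hsum i.succ)
        (fun i => hC i.succ) _
    | succ i =>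
      simp only [Fin.cons_succ]
      rw [Finset.sum_comm]
      simp only [← Finset.ite_sum_zero, ← trace_sum, ← Finset.mul_sum, ← Finset.sum_mul, hsum 0,
        mul_one]
      rw [← Finset.sum_filter]
      exact ih (fun i => hP i.succ) (fun i => hsum i.succ) (fun i => hC i.succ) i

lemma trace_conjTranspose_mul_self_mul_nonneg {L Z G : Matrix d d 𝕜} (hL : Commute L Z)
    (hZ : Z.PosSemidef) (hG : G.PosSemidef) : 0 ≤ (Lᴴ * L * (Z * G)).trace := by
  have hcyc : (Lᴴ * L * (Z * G)).trace = (Z * (L * G * Lᴴ)).trace := by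
    rw [mul_assoc, ← mul_assoc L, hL.eq, trace_mul_comm]
    simp only [mul_assoc]
  rw [hcyc]
  exact hZ.trace_mul_nonneg (hG.mul_mul_conjTranspose_same L)

end Matrix

lemma exists_probability_mul_eq {Y : Type*} [Fintype Y] [Nonempty Y] {w : Y → ℝ}
    (hw : ∀ y, 0 ≤ w y) :
    ∃ r : Y → ℝ, (∀ y, 0 ≤ r y) ∧ ∑ y, r y = 1 ∧ ∀ y, w y = (∑ y', w y') * r y := by
  by_cases h0 : ∑ y', w y' = 0
  · refine ⟨fun _ => (Fintype.card Y : ℝ)⁻¹, fun _ => by positivity, by simp, fun y => ?_⟩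
    simp [h0, (Finset.sum_eq_zero_iff_of_nonneg fun y _ => hw y).mp h0 y (Finset.mem_univ y)]
  · refine ⟨fun y => w y / ∑ y', w y',
      fun y => div_nonneg (hw y) (Finset.sum_nonneg fun y _ => hw y),
      by rw [← Finset.sum_div, div_self h0], fun y => by field_simp⟩

lemma exists_local_model {V A B X Y : Type*} [Fintype V] [Fintype X] [Fintype Y] [DecidableEq X]
    (f : V → A → X) (w : V → B → Y → ℝ) (t : V → ℝ) (hw : ∀ v b y, 0 ≤ w v b y)
    (ht : ∀ v, 0 ≤ t v) (hwt : ∀ v b, ∑ y, w v b y = t v) (ht1 : ∑ v, t v = 1) :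
    ∃ (m : ℕ) (lam : Fin m → ℝ) (qv : A → Fin m → X → ℝ) (rv : B → Fin m → Y → ℝ),
      (∀ k, 0 ≤ lam k) ∧ (∑ k, lam k = 1) ∧
      (∀ a k x, 0 ≤ qv a k x) ∧ (∀ a k, ∑ x, qv a k x = 1) ∧
      (∀ b k y, 0 ≤ rv b k y) ∧ (∀ b k, ∑ y, rv b k y = 1) ∧
      ∀ a b x y, ∑ v with f v a = x, w v b y = ∑ k, lam k * qv a k x * rv b k y := by
  have hY (b : B) : Nonempty Y := by
    by_contra hY
    rw [not_nonempty_iff] at hY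
    simp [← hwt _ b] at ht1
  choose r hr0 hr1 hwr using fun v b => haveI := hY b; exists_probability_mul_eq (hw v b)
  let e := (Fintype.equivFin V).symm
  refine ⟨Fintype.card V, fun k => t (e k), fun a k x => if f (e k) a = x then 1 else 0,
    fun b k => r (e k) b, fun k => ht _, by rw [e.sum_comp, ht1], fun a k x => by positivity,
    fun a k => by simp, fun b k => hr0 _ b, fun b k => hr1 _ b, fun a b x y => ?_⟩
  rw [Finset.sum_filter, ← e.sum_comp]
  refine Finset.sum_congr rfl fun k _ => ?_
  by_cases h : f (e k) a = x <;> simp [h, hwr _ b y, hwt]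

/-- if the shared density operator γ on D ⊗ E commutes with all of
Alice's measurement operators R_a^x ⊗ I, then the correlation
p^{xy}_{ab} = Tr[γ (R_a^x ⊗ S_b^y)] is classical, i.e., a convex combination of
product distributions. -/
theorem stmt18 {D E A B X Y : Type*} [Fintype D] [DecidableEq D] [Fintype E] [DecidableEq E]
    [Fintype A] [Fintype B] [Fintype X] [Fintype Y]
    (γ : Matrix (D × E) (D × E) ℂ) (hγ : γ.PosSemidef) (htr : γ.trace = 1)
    (R : A → X → Matrix D D ℂ) (S : B → Y → Matrix E E ℂ)
    (hR : ∀ a x, (R a x).PosSemidef) (hRsum : ∀ a, ∑ x, R a x = 1)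
    (hS : ∀ b y, (S b y).PosSemidef) (hSsum : ∀ b, ∑ y, S b y = 1)
    (hcomm : ∀ a x, Commute (R a x ⊗ₖ (1 : Matrix E E ℂ)) γ) :
    ∃ (m : ℕ) (lam : Fin m → ℝ) (qv : A → Fin m → X → ℝ) (rv : B → Fin m → Y → ℝ),
      (∀ k, 0 ≤ lam k) ∧ (∑ k, lam k = 1) ∧
      (∀ a k x, 0 ≤ qv a k x) ∧ (∀ a k, ∑ x, qv a k x = 1) ∧
      (∀ b k y, 0 ≤ rv b k y) ∧ (∀ b k, ∑ y, rv b k y = 1) ∧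
      (∀ a b x y, ((R a x ⊗ₖ S b y) * γ).trace
        = ((∑ k, lam k * qv a k x * rv b k y : ℝ) : ℂ)) := by
  classical
  let eA := (Fintype.equivFin A).symm
  let P i x := R (eA i) x ⊗ₖ (1 : Matrix E E ℂ)
  have hP i x : (P i x).PosSemidef := (hR _ x).kronecker PosSemidef.one
  have hPsum i : ∑ x, P i x = 1 := by simp only [P, ← sum_kronecker, hRsum, one_kronecker_one]
  have hPC (N : Matrix E E ℂ) i x : Commute (P i x) ((1 ⊗ₖ N) * γ) :=
    (commute_kronecker_one_one_kronecker _ N).mul_right (hcomm _ x)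
  let τ v (N : Matrix E E ℂ) := ((ludersProd P v)ᴴ * ludersProd P v * ((1 ⊗ₖ N) * γ)).trace
  have hτ v N (hN : N.PosSemidef) : 0 ≤ τ v N :=
    trace_conjTranspose_mul_self_mul_nonneg
      (commute_ludersProd (fun i x => commute_kronecker_one_one_kronecker _ N) v)
      (PosSemidef.one.kronecker hN) hγ
  have hτS v b : ∑ y, τ v (S b y) = τ v 1 := by
    simp only [τ, ← trace_sum, ← Finset.mul_sum, ← Finset.sum_mul, ← kronecker_sum, hSsum]
  have hτ1 : ∑ v, τ v 1 = 1 := by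
    have h := sum_trace_ludersProd_conj hP hPsum (hPC 1) 1
    simp only [mul_one, one_mul, one_kronecker_one, htr] at h
    simpa only [τ, one_kronecker_one, one_mul] using h
  have hmarg a b x y :
      ∑ v with v (eA.symm a) = x, τ v (S b y) = ((R a x ⊗ₖ S b y) * γ).trace := by
    rw [sum_trace_ludersProd_of_eq hP hPsum (hPC (S b y)), ← mul_assoc, ← mul_kronecker_mul,
      mul_one, one_mul, eA.apply_symm_apply]
  obtain ⟨m, lam, qv, rv, hlam, hlam1, hqv, hqv1, hrv, hrv1, hmodel⟩ :=
    exists_local_model (fun v a => v (eA.symm a)) (fun v b y => (τ v (S b y)).re)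
      (fun v => (τ v 1).re) (fun v b y => (Complex.nonneg_iff.mp (hτ v _ (hS b y))).1)
      (fun v => (Complex.nonneg_iff.mp (hτ v 1 PosSemidef.one)).1)
      (fun v b => by rw [← Complex.re_sum, hτS])
      (by rw [← Complex.re_sum, hτ1, Complex.one_re])
  refine ⟨m, lam, qv, rv, hlam, hlam1, hqv, hqv1, hrv, hrv1, fun a b x y => ?_⟩
  rw [← hmodel, ← hmarg, Complex.ofReal_sum]
  exact Finset.sum_congr rfl fun v _ => Complex.eq_re_of_ofReal_le (r := 0)
    (by rw [Complex.ofReal_zero]; exact hτ v _ (hS b y))
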